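/- (S-Procedure implication, sufficiency direction) Let A be an n×n Hermitian matrix, b ∈ ℂⁿ, c ∈ ℝ, and φ > 0. If there exists α ≥ 0 such that the (n+1)×(n+1) block matrix [[αI + A, b], [b†, -αφ² + c]] is positive semidefinite, then for every x ∈ ℂⁿ with ‖x‖² ≤ φ² one has x†Ax + 2Re(b†x) + c ≥ 0. -/

import Mathlib

/-!
Evaluating the positive semidefinite block matrix at the vector `(x, 1)` gives
`x†Ax + α‖x‖² + 2 Re(b†x) + c - αφ² ≥ 0`, and `α‖x‖² ≤ αφ²` on the ball since `α ≥ 0`.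
-/

open Matrix
open scoped ComplexOrder

namespace Matrix

variable {n m 𝕜 : Type*} [Fintype n] [Fintype m]

theorem star_sumElim_dotProduct_fromBlocks_mulVec {α : Type*} [CommSemiring α] [StarRing α]
    (A : Matrix n n α) (B : Matrix n m α) (C : Matrix m n α) (D : Matrix m m α)
    (x : n → α) (y : m → α) :
    star (Sum.elim x y) ⬝ᵥ fromBlocks A B C D *ᵥ Sum.elim x y =
      star x ⬝ᵥ A *ᵥ x + star x ⬝ᵥ B *ᵥ y + (star y ⬝ᵥ C *ᵥ x + star y ⬝ᵥ D *ᵥ y) := by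
  rw [fromBlocks_mulVec, Function.star_sumElim, sumElim_dotProduct_sumElim]
  simp only [Sum.elim_comp_inl, Sum.elim_comp_inr, dotProduct_add]

theorem PosSemidef.re_dotProduct_add_two_re_add_re_nonneg [RCLike 𝕜] {P : Matrix n n 𝕜}
    {b : n → 𝕜} {d : 𝕜}
    (hM : (fromBlocks P (replicateCol Unit b) (replicateRow Unit (star b))
      (of fun _ _ => d)).PosSemidef) (x : n → 𝕜) :
    0 ≤ RCLike.re (star x ⬝ᵥ P *ᵥ x) + 2 * RCLike.re (star b ⬝ᵥ x) + RCLike.re d := by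
  have h := (RCLike.nonneg_iff.1 (hM.dotProduct_mulVec_nonneg (Sum.elim x fun _ => 1))).1
  have hcol : replicateCol Unit b *ᵥ (fun _ => 1) = b := by
    ext
    simp [mulVec, dotProduct]
  have hrow : star (fun _ : Unit => (1 : 𝕜)) ⬝ᵥ (replicateRow Unit (star b) *ᵥ x : Unit → 𝕜) =
      star b ⬝ᵥ x := by
    simp [mulVec, dotProduct]
  have hd : star (fun _ : Unit => (1 : 𝕜)) ⬝ᵥ
      (of fun _ _ => d : Matrix Unit Unit 𝕜) *ᵥ (fun _ => 1) = d := by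
    simp [mulVec, dotProduct]
  have hre : RCLike.re (star x ⬝ᵥ b) = RCLike.re (star b ⬝ᵥ x) := by
    rw [star_dotProduct, RCLike.star_def, RCLike.conj_re]
  rw [star_sumElim_dotProduct_fromBlocks_mulVec, hcol, hrow, hd] at h
  simp only [map_add, hre] at h
  linarith

theorem re_star_dotProduct_self (x : n → ℂ) :
    (star x ⬝ᵥ x).re = ∑ i, Complex.normSq (x i) := by
  simp [dotProduct, Complex.normSq_apply]

theorem re_star_dotProduct_smul_one_add_mulVec [DecidableEq n] (α : ℝ) (A : Matrix n n ℂ)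
    (x : n → ℂ) :
    (star x ⬝ᵥ ((α : ℂ) • 1 + A) *ᵥ x).re =
      α * ∑ i, Complex.normSq (x i) + (star x ⬝ᵥ A *ᵥ x).re := by
  rw [add_mulVec, smul_mulVec, one_mulVec, dotProduct_add, dotProduct_smul, Complex.add_re,
    smul_eq_mul, Complex.re_ofReal_mul, re_star_dotProduct_self]

end Matrix

theorem stmt7_general (n : ℕ) (A : Matrix (Fin n) (Fin n) ℂ)
    (b : Fin n → ℂ) (c : ℝ) (φ : ℝ)
    (h : ∃ α : ℝ, 0 ≤ α ∧
      (Matrix.fromBlocks ((α : ℂ) • (1 : Matrix (Fin n) (Fin n) ℂ) + A)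
        (Matrix.of fun i (_ : Unit) => b i)
        (Matrix.of fun (_ : Unit) j => star (b j))
        (Matrix.of fun (_ : Unit) (_ : Unit) => ((-α * φ ^ 2 + c : ℝ) : ℂ))).PosSemidef) :
    ∀ x : Fin n → ℂ, (∑ i, Complex.normSq (x i)) ≤ φ ^ 2 →
      0 ≤ (star x ⬝ᵥ A.mulVec x).re + 2 * (star b ⬝ᵥ x).re + c := by
  obtain ⟨α, hα, hM⟩ := h
  intro x hx
  have hform := hM.re_dotProduct_add_two_re_add_re_nonneg x
  rw [RCLike.re_to_complex, re_star_dotProduct_smul_one_add_mulVec] at hform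
  simp only [RCLike.re_to_complex, Complex.ofReal_re] at hform
  linarith [mul_le_mul_of_nonneg_left hx hα]

/-- (S-Procedure, sufficiency direction.) Let `A` be an `n×n` Hermitian matrix,
`b ∈ ℂⁿ`, `c ∈ ℝ`, `φ > 0`. If there exists `α ≥ 0` such that the block matrix
`[[αI + A, b], [b†, -αφ² + c]]` is positive semidefinite, then for every `x ∈ ℂⁿ`
with `‖x‖² ≤ φ²` one has `x†Ax + 2Re(b†x) + c ≥ 0`. -/
theorem stmt7 (n : ℕ) (A : Matrix (Fin n) (Fin n) ℂ) (hA : A.IsHermitian)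
    (b : Fin n → ℂ) (c : ℝ) (φ : ℝ) (hφ : 0 < φ)
    (h : ∃ α : ℝ, 0 ≤ α ∧
      (Matrix.fromBlocks ((α : ℂ) • (1 : Matrix (Fin n) (Fin n) ℂ) + A)
        (Matrix.of fun i (_ : Unit) => b i)
        (Matrix.of fun (_ : Unit) j => star (b j))
        (Matrix.of fun (_ : Unit) (_ : Unit) => ((-α * φ ^ 2 + c : ℝ) : ℂ))).PosSemidef) :
    ∀ x : Fin n → ℂ, (∑ i, Complex.normSq (x i)) ≤ φ ^ 2 →
      0 ≤ (star x ⬝ᵥ A.mulVec x).re + 2 * (star b ⬝ᵥ x).re + c :=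
  stmt7_general n A b c φ h
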